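/- arXiv:2511.20984 — 3 statements merged into one kernel-verified Lean document; each statement's English description precedes it below -/
import Mathlib

section
/- For any impartial game with activeness G^g, the set 𝒢^𝟙(G^g) (with respect to the all-ones sequence) is the singleton {mex ∪_{G'^{g'}∈G} 𝒢^𝟙(G'^{g'})}; equivalently, 𝒢^𝟙(G^g) = {𝒢(G^g)} where 𝒢 is the ordinary Grundy value computed ignoring activeness. -/
inductive AGame : Type where
  | mk : List AGame → Bool → AGame

namespace AGame

noncomputable instance : DecidableEq AGame := Classical.decEq _

def opts : AGame → List AGame | mk gs _ => gs
def act : AGame → Bool | mk _ g => g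

theorem sizeOf_lt_of_mem {G G' : AGame} (h : G' ∈ G.opts) : sizeOf G' < sizeOf G := by
  cases G with
  | mk gs g =>
    simp only [opts] at h
    have := List.sizeOf_lt_of_mem h
    simp [AGame.mk.sizeOf_spec]
    omega

/-- Disjunctive sum of games with activeness. -/
def add (G H : AGame) : AGame :=
  mk (G.opts.attach.map (fun x => add x.1 H) ++
      H.opts.attach.map (fun y => add G y.1)) (G.act || H.act)
termination_by sizeOf G + sizeOf H
decreasing_by
  · have := sizeOf_lt_of_mem x.2; omega
  · have := sizeOf_lt_of_mem y.2; omega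

/-- `PPos G` means the outcome of `G` is 𝒫 (second player wins). -/
def PPos (G : AGame) : Prop :=
  G.act = false ∨ ∀ G' ∈ G.opts.attach, ¬ PPos G'.1
termination_by sizeOf G
decreasing_by
  have := sizeOf_lt_of_mem G'.2; omega

/-- Hereditary set-equality (the paper's ≅). -/
def Identical (G H : AGame) : Prop :=
  G.act = H.act ∧ (∀ G' ∈ G.opts.attach, ∃ H' ∈ H.opts.attach, Identical G'.1 H'.1)
              ∧ (∀ H' ∈ H.opts.attach, ∃ G' ∈ G.opts.attach, Identical G'.1 H'.1)
termination_by sizeOf G + sizeOf H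
decreasing_by
  · have := sizeOf_lt_of_mem G'.2; have := sizeOf_lt_of_mem H'.2; omega
  · have := sizeOf_lt_of_mem G'.2; have := sizeOf_lt_of_mem H'.2; omega

/-- Equivalence of games with activeness: same outcome in every sum. -/
def Equiv (G H : AGame) : Prop := ∀ X : AGame, (PPos (add G X) ↔ PPos (add H X))

end AGame

namespace AGame

/-- Nimbers with activeness: `star γ n ≅ {star γ j : j < n}^{γ n}`. -/
def star (γ : ℕ → Bool) : ℕ → AGame
  | n => mk ((List.range n).attach.map (fun j => star γ j.1)) (γ n)
termination_by n => n
decreasing_by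
  have := j.2; simp [List.mem_range] at this; omega

/-- The generalized Grundy set `𝒢^γ(G)`. -/
def GSet (γ : ℕ → Bool) (G : AGame) : Set ℕ := {n | PPos (add G (star γ n))}

/-- Minimum excludant of a set of naturals. -/
noncomputable def mex (S : Set ℕ) : ℕ := sInf {n | n ∉ S}

/-- Ordinary Grundy value, computed ignoring activeness. -/
noncomputable def grundy (G : AGame) : ℕ :=
  mex {m | ∃ G' ∈ G.opts.attach, grundy G'.1 = m}
termination_by sizeOf G
decreasing_by
  have := sizeOf_lt_of_mem G'.2; omega

/-- The three types of games with activeness. -/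
inductive AType : Type where
  | inactive : AType            -- type 0
  | activeSomeInactive : AType  -- type 1_{∃0}
  | activeAllActive : AType     -- type 1_{∀1}

open Classical in
/-- `type(G^g)`. -/
noncomputable def typ (G : AGame) : AType :=
  if G.act = false then .inactive
  else if ∃ G' ∈ G.opts, G'.act = false then .activeSomeInactive
  else .activeAllActive

/-- Formal birthday `b(G)`. -/
def bday (G : AGame) : ℕ :=
  (G.opts.attach.map (fun G' => bday G'.1 + 1)).foldr max 0
termination_by sizeOf G
decreasing_by
  have := sizeOf_lt_of_mem G'.2; omega

/-- An option `G'` of `G` is reversible if it has an option equivalent to `G`. -/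
def Reversible (G G' : AGame) : Prop := ∃ G'' ∈ G'.opts, Equiv G'' G

/-- A canonical game: all options canonical and no option reversible. -/
def Canonical (G : AGame) : Prop :=
  (∀ G' ∈ G.opts.attach, Canonical G'.1) ∧ (∀ G' ∈ G.opts, ¬ Reversible G G')
termination_by sizeOf G
decreasing_by
  have := sizeOf_lt_of_mem G'.2; omega

/-- A transitive game: all options transitive and options of options are options. -/
def TransGame (G : AGame) : Prop :=
  (∀ G' ∈ G.opts.attach, TransGame G'.1) ∧ (∀ G' ∈ G.opts, ∀ G'' ∈ G'.opts, G'' ∈ G.opts)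
termination_by sizeOf G
decreasing_by
  have := sizeOf_lt_of_mem G'.2; omega

/-- `G` is covered by `H` if every option of `G` is equivalent to some option of `H`. -/
def Covered (G H : AGame) : Prop := ∀ G' ∈ G.opts, ∃ H' ∈ H.opts, Equiv G' H'

/-- The relation `G ⋈ H`. -/
def Bowtie (G H : AGame) : Prop :=
  (∀ G' ∈ G.opts, ¬ Equiv G' H) ∧ (∀ H' ∈ H.opts, ¬ Equiv G H')

/-- The linear chain `∅^{g₀ g₁ … gₙ}`. -/
def chain (g : ℕ → Bool) : ℕ → AGame
  | 0 => mk [] (g 0)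
  | n + 1 => mk [chain g n] (g (n + 1))

end AGame

/-!
With the all-ones sequence every nimber `star (fun _ => true) n` is active, hence so is every
sum `G + *n`, and then `G + *n` is a 𝒫-position exactly when it has no 𝒫-position option.
This is the recursion of the ordinary Sprague–Grundy theory, so by induction on `G` and `n`,
`G + *n` is a 𝒫-position iff `grundy G = n`, whatever the activeness of `G` and its options.
-/

namespace AGame

lemma mex_le_of_notMem {S : Set ℕ} {n : ℕ} (hn : n ∉ S) : mex S ≤ n :=
  Nat.sInf_le hn

lemma mex_notMem {S : Set ℕ} (hS : S.Finite) : mex S ∉ S :=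
  Nat.sInf_mem hS.infinite_compl.nonempty

lemma mex_eq_iff {S : Set ℕ} (hS : S.Finite) {n : ℕ} : mex S = n ↔ n ∉ S ∧ n ≤ mex S := by
  refine ⟨fun h => h ▸ ⟨mex_notMem hS, le_rfl⟩, fun ⟨hn, hle⟩ => ?_⟩
  exact le_antisymm (mex_le_of_notMem hn) hle

lemma grundy_eq_mex (G : AGame) : grundy G = mex (grundy '' {G' | G' ∈ G.opts}) := by
  rw [grundy]
  congr 1
  ext m
  simp

lemma act_add (G H : AGame) : (add G H).act = (G.act || H.act) := by
  rw [add]; rfl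

lemma mem_opts_add {G H X : AGame} :
    X ∈ (add G H).opts ↔ (∃ G' ∈ G.opts, add G' H = X) ∨ ∃ H' ∈ H.opts, add G H' = X := by
  rw [add]
  simp [opts]

lemma act_star (γ : ℕ → Bool) (n : ℕ) : (star γ n).act = γ n := by
  rw [star]; rfl

lemma mem_opts_star {γ : ℕ → Bool} {n : ℕ} {X : AGame} :
    X ∈ (star γ n).opts ↔ ∃ j < n, star γ j = X := by
  rw [star]
  simp [opts]

lemma pPos_iff_of_act {G : AGame} (hG : G.act = true) : PPos G ↔ ∀ G' ∈ G.opts, ¬ PPos G' := by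
  rw [PPos]
  simp [hG]

lemma pPos_add_iff_of_act {G H : AGame} (h : (add G H).act = true) :
    PPos (add G H) ↔ (∀ G' ∈ G.opts, ¬ PPos (add G' H)) ∧ ∀ H' ∈ H.opts, ¬ PPos (add G H') := by
  simp only [pPos_iff_of_act h, mem_opts_add]
  grind

theorem pPos_add_star_ones_iff (G : AGame) (n : ℕ) :
    PPos (add G (star (fun _ => true) n)) ↔ grundy G = n := by
  have hact : (add G (star (fun _ => true) n)).act = true := by
    rw [act_add, act_star, Bool.or_true]
  have hopts : (∀ G' ∈ G.opts, ¬ PPos (add G' (star (fun _ => true) n))) ↔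
      n ∉ grundy '' {G' | G' ∈ G.opts} := by
    simp only [Set.mem_image, Set.mem_ofPred_eq, not_exists, not_and]
    exact forall₂_congr fun G' _ => (pPos_add_star_ones_iff G' n).not
  have hstars : (∀ X ∈ (star (fun _ => true) n).opts, ¬ PPos (add G X)) ↔ n ≤ grundy G := by
    simp only [mem_opts_star, forall_exists_index, and_imp, forall_apply_eq_imp_iff₂]
    refine ⟨fun h => not_lt.mp fun hlt => h _ hlt ((pPos_add_star_ones_iff G _).mpr rfl),
      fun h j hj hP => ?_⟩
    exact absurd ((pPos_add_star_ones_iff G j).mp hP) (by omega)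
  rw [pPos_add_iff_of_act hact, hopts, hstars, grundy_eq_mex,
    mex_eq_iff ((List.finite_toSet _).image _)]
termination_by sizeOf G + n
decreasing_by
  · have := sizeOf_lt_of_mem ‹_ ∈ G.opts›; omega
  all_goals omega

theorem gSet_ones (G : AGame) : GSet (fun _ => true) G = {grundy G} := by
  ext n
  rw [GSet, Set.mem_ofPred_eq, pPos_add_star_ones_iff, Set.mem_singleton_iff, eq_comm]

end AGame

/-- For the all-ones sequence, `𝒢^𝟙(G)` is the singleton of the mex of the union of
the options' sets, equivalently the singleton of the ordinary Grundy value. -/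
theorem AGame.gset_ones (G : AGame) :
    AGame.GSet (fun _ => true) G =
      {AGame.mex {m : ℕ | ∃ G' ∈ G.opts, m ∈ AGame.GSet (fun _ => true) G'}} ∧
    AGame.GSet (fun _ => true) G = {AGame.grundy G} := by
  have hopts : {m : ℕ | ∃ G' ∈ G.opts, m ∈ AGame.GSet (fun _ => true) G'} =
      AGame.grundy '' {G' | G' ∈ G.opts} := by
    ext m
    simp [AGame.gSet_ones, eq_comm]
  rw [hopts, ← AGame.grundy_eq_mex, and_self]
  exact AGame.gSet_ones G
end

section
/- If two impartial games with activeness G^g and H^h are equivalent (o(G^g+X^x)=o(H^h+X^x) for all X^x), then for every sequence γ ∈ {0,1}^∞, 𝒢^γ(G^g) = 𝒢^γ(H^h). -/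
/-- Equivalent games have the same generalized Grundy set for every sequence γ. -/
theorem AGame.gset_eq_of_equiv (G H : AGame) (h : AGame.Equiv G H) (γ : ℕ → Bool) :
    AGame.GSet γ G = AGame.GSet γ H :=
  Set.ext fun n => h (star γ n)
end

section
/- Replacement Lemma with activeness: if G'₁ = H'₁ (equivalent), then the game {G'₁, G'₂, ..., G'ₙ}^g is equivalent to {H'₁, G'₂, ..., G'ₙ}^g (each G'ᵢ, H'₁ carrying its own activeness bit). -/
namespace AGame

theorem Equiv.refl (G : AGame) : Equiv G G := fun _ => Iff.rfl

theorem Equiv.symm {G H : AGame} (h : Equiv G H) : Equiv H G := fun X => (h X).symm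

theorem ppos_iff (G : AGame) :
    PPos G ↔ G.act = false ∨ ∀ G' ∈ G.opts, ¬ PPos G' := by
  rw [PPos]
  simp only [List.mem_attach, true_implies, Subtype.forall]

theorem ppos_add_iff (G X : AGame) :
    PPos (add G X) ↔ (G.act || X.act) = false ∨
      (∀ G' ∈ G.opts, ¬ PPos (add G' X)) ∧ ∀ X' ∈ X.opts, ¬ PPos (add G X') := by
  rw [add, ppos_iff]
  simp only [opts.eq_1, act.eq_1, List.mem_append, List.mem_map, List.mem_attach, true_and,
    Subtype.exists]
  constructor
  · rintro (hact | hopts)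
    · exact Or.inl hact
    · exact Or.inr ⟨fun G' hG' => hopts _ (Or.inl ⟨G', hG', rfl⟩),
        fun X' hX' => hopts _ (Or.inr ⟨X', hX', rfl⟩)⟩
  · rintro (hact | ⟨hleft, hright⟩)
    · exact Or.inl hact
    · refine Or.inr ?_
      rintro _ (⟨G', hG', rfl⟩ | ⟨X', hX', rfl⟩)
      · exact hleft G' hG'
      · exact hright X' hX'

/- Induction on `X`: a move `H' + X` is answered through an equivalent `G' + X`, and a move
`H + X'` by the induction hypothesis with the roles of `G` and `H` exchanged. -/
theorem ppos_add_of_covered {G H : AGame} (hact : G.act = H.act) (hGH : Covered G H)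
    (hHG : Covered H G) (X : AGame) : PPos (add G X) → PPos (add H X) := by
  rw [ppos_add_iff, ppos_add_iff, hact]
  rintro (hfalse | ⟨hleft, hright⟩)
  · exact Or.inl hfalse
  · refine Or.inr ⟨fun H' hH' hp => ?_, fun X' hX' hp => ?_⟩
    · obtain ⟨G', hG', hequiv⟩ := hHG H' hH'
      exact hleft G' hG' ((hequiv X).mp hp)
    · exact hright X' hX' (ppos_add_of_covered hact.symm hHG hGH X' hp)
termination_by sizeOf X
decreasing_by exact sizeOf_lt_of_mem hX'

theorem equiv_of_covered {G H : AGame} (hact : G.act = H.act) (hGH : Covered G H)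
    (hHG : Covered H G) : Equiv G H := fun X =>
  ⟨ppos_add_of_covered hact hGH hHG X, ppos_add_of_covered hact.symm hHG hGH X⟩

theorem covered_cons {G1 H1 : AGame} (h : Equiv G1 H1) (rest : List AGame) (g g' : Bool) :
    Covered (mk (G1 :: rest) g) (mk (H1 :: rest) g') := by
  rintro G' hG'
  rcases List.mem_cons.mp hG' with rfl | hrest
  · exact ⟨H1, List.mem_cons_self, h⟩
  · exact ⟨G', List.mem_cons_of_mem _ hrest, Equiv.refl G'⟩

end AGame

/-- Replacement Lemma: replacing an option by an equivalent game yields an equivalent game. -/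
theorem AGame.replacement (g : Bool) (G1 H1 : AGame) (rest : List AGame)
    (h : AGame.Equiv G1 H1) :
    AGame.Equiv (AGame.mk (G1 :: rest) g) (AGame.mk (H1 :: rest) g) :=
  AGame.equiv_of_covered rfl (AGame.covered_cons h rest g g)
    (AGame.covered_cons (AGame.Equiv.symm h) rest g g)
end
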